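/- Let G be an infinite finitely generated group in which every conjugacy class is finite. Then the center Z(G) is infinite. -/

import Mathlib

/-- An infinite finitely generated group in which every conjugacy class is finite
has infinite center. -/
theorem center_infinite_of_fg_fc (G : Type*) [Group G] [Group.FG G] [Infinite G]
    (h : ∀ g : G, {x : G | IsConj g x}.Finite) :
    ((Subgroup.center G : Subgroup G) : Set G).Infinite := by
  classical
  -- Step 1: each centralizer of a single element has finite index.
  have key : ∀ g : G, (Subgroup.centralizer (Subgroup.zpowers g : Set G)).FiniteIndex := by
    intro g
    have horb : (MulAction.orbit (ConjAct G) g) = {x : G | IsConj g x} := by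
      ext x
      rw [ConjAct.mem_orbit_conjAct]
      exact ⟨fun hc => hc.symm, fun hc => hc.symm⟩
    have hfin : (MulAction.orbit (ConjAct G) g).Finite := by rw [horb]; exact h g
    have hpos : 0 < (MulAction.orbit (ConjAct G) g).ncard :=
      (Set.ncard_pos hfin).mpr ⟨g, MulAction.mem_orbit_self g⟩
    have hstab : (MulAction.stabilizer (ConjAct G) g).FiniteIndex := by
      constructor
      rw [MulAction.index_stabilizer]
      omega
    have hcomap : Subgroup.centralizer ({g} : Set G) =
        Subgroup.comap ConjAct.toConjAct.toMonoidHom (MulAction.stabilizer (ConjAct G) g) :=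
      Subgroup.centralizer_eq_comap_stabilizer g
    have hcent1 : (Subgroup.centralizer ({g} : Set G)).FiniteIndex := by
      constructor
      rw [hcomap]
      exact (Subgroup.index_comap_of_surjective (H := MulAction.stabilizer (ConjAct G) g)
        (f := (ConjAct.toConjAct : G ≃* ConjAct G).toMonoidHom) ConjAct.toConjAct.surjective).trans_ne
        hstab.index_ne_zero
    have heq : Subgroup.centralizer (Subgroup.zpowers g : Set G)
        = Subgroup.centralizer ({g} : Set G) := by
      apply le_antisymm
      · exact Subgroup.centralizer_le (by simp [Subgroup.mem_zpowers])
      · intro x hx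
        rw [Subgroup.mem_centralizer_iff] at hx ⊢
        intro y hy
        obtain ⟨n, rfl⟩ := Subgroup.mem_zpowers_iff.mp hy
        have hc : Commute g x := hx g rfl
        exact (hc.zpow_left n).eq
    rw [heq]
    exact hcent1
  -- Step 2: the center has finite index.
  obtain ⟨S, hS, Sfin⟩ := Group.fg_iff.mp ‹Group.FG G›
  have hcenter : Subgroup.center G = ⨅ g : S, Subgroup.centralizer
      (Subgroup.zpowers (g : G)) := by
    rw [Subgroup.center_eq_infi' hS]
    refine iInf_congr fun g => ?_
    rw [Subgroup.zpowers_eq_closure, Subgroup.centralizer_closure]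
  have hFI : (Subgroup.center G).FiniteIndex := by
    rw [hcenter]
    have : Finite S := Sfin
    exact Subgroup.finiteIndex_iInf fun i => key i
  -- Step 3: a finite-index subgroup of an infinite group is infinite.
  intro hfin
  have : Finite (Subgroup.center G) := hfin.to_subtype
  have : Finite (G ⧸ Subgroup.center G) := Subgroup.finite_quotient_of_finiteIndex
  have : Finite G := Finite.of_equiv _ (Subgroup.groupEquivQuotientProdSubgroup (s := Subgroup.center G)).symm
  exact not_finite G
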